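/- Let 𝒦 be a finite set and 𝒯, 𝒵 countable sets, and let η, α ∈ [0,1). Let P be a pmf on 𝒦×𝒦×𝒦×𝒯×𝒵 with coordinates (K, Kx, Ky, F, Z) such that Pr_P[K = Kx = Ky] ≥ 1 − η and d(P_{KFZ}, P_unif × P_{FZ}) ≤ α. Then for every ε, δ ∈ (0,1) with ε ≥ η and ε + δ ≥ α + η, there exists a pmf Q on 𝒦×𝒦×𝒦×𝒯×𝒵 with coordinates (K″, Kx, Ky, F, Z) whose marginal on (Kx, Ky, F, Z) equals that of P, such that Pr_Q[K″ = Kx = Ky] ≥ 1 − ε and d(Q_{K″FZ}, P_unif × P_{FZ}) ≤ δ. (Hybrid protocol: an (η,α)-secret key yields an (ε,δ)-secret key of the same length.) -/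

import Mathlib

open scoped BigOperators

noncomputable section

attribute [local instance] Classical.propDecidable

/-- Probability of a set under a pmf. -/
def probOf {α : Type*} (P : α → ℝ) (S : Set α) : ℝ := ∑' a : S, P a

/-- `P` is a probability mass function. -/
def IsPMF {α : Type*} (P : α → ℝ) : Prop := (∀ a, 0 ≤ P a) ∧ ∑' a, P a = 1

/-- Variational distance between two pmfs. -/
def tvDist {α : Type*} (P Q : α → ℝ) : ℝ := (1 / 2) * ∑' a, |P a - Q a|

/-!
Fix the side information `w = (f, z)`. In the fibre over `w`, every key `k` whose mass
`P_{KFZ}(k, w)` exceeds the uniform level `P_{FZ}(w) / |𝒦|` gives up the fraction `t` of its surplus,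
scaling all its `(Kx, Ky)`-entries down by the same factor, and the mass removed from each
`(Kx, Ky)`-column is handed to the keys below the uniform level in proportion to their deficits
(surpluses and deficits have the same total). This keeps `P_{KxKyFZ}`, replaces `P_{KFZ}` by
`(1 - t) P_{KFZ} + t (P_unif × P_{FZ})`, so that the secrecy distance `d` becomes `(1 - t) d`, and
removes at most `t d` of mass from any event, in particular from `{K = Kx = Ky}`. Since
`d ≤ α ≤ (ε - η) + δ`, some `t ∈ [0, 1]` has `t d ≤ ε - η` and `(1 - t) d ≤ δ`.
-/

section Summation

variable {α β : Type*}

lemma mul_div_self_of_le {x D : ℝ} (hx : 0 ≤ x) (hxD : x ≤ D) : x * D / D = x := by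
  rcases eq_or_ne D 0 with hD | hD
  · rw [hD, le_antisymm (hD ▸ hxD) hx, zero_mul, div_zero]
  · exact mul_div_cancel_right₀ x hD

lemma sum_inv_card_mul_sum [Fintype α] (g : α → ℝ) :
    ∑ _a : α, (Fintype.card α : ℝ)⁻¹ * ∑ a, g a = ∑ a, g a := by
  rcases isEmpty_or_nonempty α with hα | hα
  · simp
  · rw [Finset.sum_const, Finset.card_univ, nsmul_eq_mul, mul_inv_cancel_left₀]
    exact_mod_cast Fintype.card_ne_zero

lemma summable_prod_iff_summable_sum_fst [Fintype α] {f : α × β → ℝ} (hf : 0 ≤ f) :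
    Summable f ↔ Summable fun b => ∑ a, f (a, b) := by
  rw [← (Equiv.prodComm β α).summable_iff,
    summable_prod_of_nonneg (f := f ∘ Equiv.prodComm β α) fun _ => hf _]
  simp only [Function.comp_apply, Equiv.prodComm_apply, Prod.swap_prod_mk, tsum_fintype]
  exact and_iff_right fun _ => .of_finite

lemma tsum_prod_eq_tsum_sum_fst [Fintype α] {f : α × β → ℝ} (hf : Summable f) :
    ∑' x, f x = ∑' b, ∑ a, f (a, b) := by
  have hfa (a : α) : Summable fun b => f (a, b) := hf.comp_injective (Prod.mk_right_injective a)
  rw [hf.tsum_prod' hfa, tsum_fintype, Summable.tsum_finsetSum fun a _ => hfa a]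

end Summation

section Distance

variable {α : Type*}

lemma tvDist_nonneg (a b : α → ℝ) : 0 ≤ tvDist a b :=
  mul_nonneg one_half_pos.le (tsum_nonneg fun _ => abs_nonneg _)

lemma tvDist_lineMap_left (a b : α → ℝ) {t : ℝ} (ht : t ≤ 1) :
    tvDist (fun x => (1 - t) * a x + t * b x) b = (1 - t) * tvDist a b := by
  have hpt (x : α) : |(1 - t) * a x + t * b x - b x| = (1 - t) * |a x - b x| := by
    rw [← abs_of_nonneg (sub_nonneg.mpr ht), ← abs_mul, abs_of_nonneg (sub_nonneg.mpr ht)]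
    ring_nf
  simp only [tvDist, hpt, tsum_mul_left]
  ring

lemma tsum_posPart_sub_eq_tvDist {a b : α → ℝ} (ha : Summable a) (hb : Summable b)
    (hab : ∑' x, a x = ∑' x, b x) : ∑' x, (a x - b x)⁺ = tvDist a b := by
  have hpos (r : ℝ) : r⁺ = (|r| + r) / 2 := by
    linarith [posPart_sub_negPart r, posPart_add_negPart r]
  have hd : Summable fun x => a x - b x := ha.sub hb
  simp only [hpos, tvDist, tsum_div_const, hd.abs.tsum_add hd, ha.tsum_sub hb, hab]
  ring

lemma probOf_sub_probOf_le_tsum_posPart {P Q : α → ℝ} (hP : Summable P) (hQ : Summable Q)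
    (S : Set α) : probOf P S - probOf Q S ≤ ∑' x, (P x - Q x)⁺ := by
  have hd : Summable fun x => (P x - Q x)⁺ :=
    .of_nonneg_of_le (fun _ => posPart_nonneg _)
      (fun x => max_le (le_abs_self _) (abs_nonneg _)) (hP.sub hQ).abs
  calc probOf P S - probOf Q S = ∑' x : S, (P x - Q x) :=
        ((hP.subtype S).tsum_sub (hQ.subtype S)).symm
    _ ≤ ∑' x : S, (P x - Q x)⁺ :=
        (hP.subtype S |>.sub (hQ.subtype S)).tsum_le_tsum (fun _ => le_posPart _) (hd.subtype S)
    _ ≤ ∑' x, (P x - Q x)⁺ := hd.tsum_subtype_le _ S (fun _ => posPart_nonneg _)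

lemma exists_mul_le_and_one_sub_mul_le {a b c : ℝ} (ha : 0 ≤ a) (hb : 0 ≤ b) (hc : 0 ≤ c)
    (habc : a ≤ b + c) : ∃ t : ℝ, 0 ≤ t ∧ t ≤ 1 ∧ t * a ≤ b ∧ (1 - t) * a ≤ c := by
  rcases le_or_gt a b with hab | hab
  · exact ⟨1, zero_le_one, le_rfl, by simpa using hab, by simpa using hc⟩
  · refine ⟨b / a, by positivity, (div_le_one₀ (hb.trans_lt hab)).mpr hab.le, ?_, ?_⟩
    · rw [div_mul_cancel₀ b (hb.trans_lt hab).ne']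
    · rw [sub_mul, div_mul_cancel₀ b (hb.trans_lt hab).ne']
      linarith

lemma IsPMF.summable {P : α → ℝ} (hP : IsPMF P) : Summable P := by
  by_contra h
  simpa [tsum_eq_zero_of_not_summable h] using hP.2

end Distance

namespace Redistribution

variable {K Y : Type*} [Fintype Y]

def rowMass (p : K → Y → ℝ) (k : K) : ℝ := ∑ y, p k y

variable (t : ℝ) (u : K → ℝ) (p : K → Y → ℝ)

def surplus (k : K) : ℝ := t * (rowMass p k - u k)⁺

def deficit (k : K) : ℝ := t * (u k - rowMass p k)⁺

def removed (k : K) (y : Y) : ℝ := p k y * (surplus t u p k / rowMass p k)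

variable {t u p}

lemma rowMass_nonneg (hp : ∀ k y, 0 ≤ p k y) (k : K) : 0 ≤ rowMass p k :=
  Finset.sum_nonneg fun y _ => hp k y

lemma surplus_nonneg (ht0 : 0 ≤ t) (k : K) : 0 ≤ surplus t u p k :=
  mul_nonneg ht0 (posPart_nonneg _)

lemma deficit_nonneg (ht0 : 0 ≤ t) (k : K) : 0 ≤ deficit t u p k :=
  mul_nonneg ht0 (posPart_nonneg _)

lemma surplus_le_rowMass (hp : ∀ k y, 0 ≤ p k y) (hu : ∀ k, 0 ≤ u k) (ht1 : t ≤ 1) (k : K) :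
    surplus t u p k ≤ rowMass p k :=
  calc t * (rowMass p k - u k)⁺ ≤ 1 * (rowMass p k - u k)⁺ :=
        mul_le_mul_of_nonneg_right ht1 (posPart_nonneg _)
    _ ≤ rowMass p k := by
        rw [one_mul]; exact max_le (by linarith [hu k]) (rowMass_nonneg hp k)

lemma removed_nonneg (hp : ∀ k y, 0 ≤ p k y) (ht0 : 0 ≤ t) (k : K) (y : Y) :
    0 ≤ removed t u p k y :=
  mul_nonneg (hp k y) (div_nonneg (surplus_nonneg ht0 k) (rowMass_nonneg hp k))

lemma sum_removed (hu : ∀ k, 0 ≤ u k) (k : K) : ∑ y, removed t u p k y = surplus t u p k := by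
  simp only [removed]
  rw [← Finset.sum_mul, ← rowMass]
  rcases eq_or_ne (rowMass p k) 0 with h | h
  · rw [h, zero_mul, surplus, h, zero_sub, posPart_eq_zero.mpr (neg_nonpos.mpr (hu k)), mul_zero]
  · exact mul_div_cancel₀ _ h

lemma deficit_sub_surplus (k : K) :
    deficit t u p k - surplus t u p k = t * (u k - rowMass p k) := by
  have h := posPart_sub_negPart (u k - rowMass p k)
  rw [← posPart_neg, neg_sub] at h
  rw [deficit, surplus, ← mul_sub, h]

variable [Fintype K]

def totalMass (p : K → Y → ℝ) : ℝ := ∑ k, rowMass p k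

lemma totalMass_nonneg (hp : ∀ k y, 0 ≤ p k y) : 0 ≤ totalMass p :=
  Finset.sum_nonneg fun k _ => rowMass_nonneg hp k

variable (t u p) in
/-- Both divisions may be by zero, but only where the numerator vanishes as well: a row of mass
zero has no surplus, and if there is no total deficit then nothing is removed. -/
def redistribute (k : K) (y : Y) : ℝ :=
  p k y - removed t u p k y + deficit t u p k * (∑ k', removed t u p k' y) / ∑ k', deficit t u p k'

lemma sum_deficit_eq_sum_surplus (hmass : ∑ k, u k = totalMass p) :
    ∑ k, deficit t u p k = ∑ k, surplus t u p k := by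
  have : ∑ k, (deficit t u p k - surplus t u p k) = 0 := by
    simp only [deficit_sub_surplus, ← Finset.mul_sum, Finset.sum_sub_distrib, hmass, totalMass,
      sub_self, mul_zero]
  rwa [Finset.sum_sub_distrib, sub_eq_zero] at this

lemma sum_sum_removed (hu : ∀ k, 0 ≤ u k) (hmass : ∑ k, u k = totalMass p) :
    ∑ y, ∑ k, removed t u p k y = ∑ k, deficit t u p k := by
  rw [Finset.sum_comm, sum_deficit_eq_sum_surplus hmass]
  exact Finset.sum_congr rfl fun k _ => sum_removed hu k

lemma sum_removed_le_sum_deficit (hp : ∀ k y, 0 ≤ p k y) (hu : ∀ k, 0 ≤ u k) (ht0 : 0 ≤ t)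
    (hmass : ∑ k, u k = totalMass p) (y : Y) :
    ∑ k, removed t u p k y ≤ ∑ k, deficit t u p k := by
  rw [← sum_sum_removed hu hmass]
  exact Finset.single_le_sum (f := fun y => ∑ k, removed t u p k y)
    (fun y _ => Finset.sum_nonneg fun k _ => removed_nonneg hp ht0 k y) (Finset.mem_univ y)

lemma sub_removed_le_redistribute (hp : ∀ k y, 0 ≤ p k y) (ht0 : 0 ≤ t) (k : K) (y : Y) :
    p k y - removed t u p k y ≤ redistribute t u p k y :=
  le_add_of_nonneg_right <| div_nonneg
    (mul_nonneg (deficit_nonneg ht0 k) (Finset.sum_nonneg fun k' _ => removed_nonneg hp ht0 k' y))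
    (Finset.sum_nonneg fun k' _ => deficit_nonneg ht0 k')

lemma redistribute_nonneg (hp : ∀ k y, 0 ≤ p k y) (hu : ∀ k, 0 ≤ u k) (ht0 : 0 ≤ t)
    (ht1 : t ≤ 1) (k : K) (y : Y) : 0 ≤ redistribute t u p k y := by
  have hfrac : surplus t u p k / rowMass p k ≤ 1 :=
    div_le_one_of_le₀ (surplus_le_rowMass hp hu ht1 k) (rowMass_nonneg hp k)
  have hkept : removed t u p k y ≤ p k y := mul_le_of_le_one_right (hp k y) hfrac
  linarith [sub_removed_le_redistribute hp ht0 (u := u) k y]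

lemma sum_redistribute (hp : ∀ k y, 0 ≤ p k y) (hu : ∀ k, 0 ≤ u k) (ht0 : 0 ≤ t)
    (hmass : ∑ k, u k = totalMass p) (y : Y) :
    ∑ k, redistribute t u p k y = ∑ k, p k y := by
  simp only [redistribute, Finset.sum_add_distrib, Finset.sum_sub_distrib, ← Finset.sum_div,
    ← Finset.sum_mul]
  rw [mul_comm, mul_div_self_of_le (Finset.sum_nonneg fun k _ => removed_nonneg hp ht0 k y)
    (sum_removed_le_sum_deficit hp hu ht0 hmass y)]
  ring

lemma totalMass_redistribute (hp : ∀ k y, 0 ≤ p k y) (hu : ∀ k, 0 ≤ u k) (ht0 : 0 ≤ t)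
    (hmass : ∑ k, u k = totalMass p) : totalMass (redistribute t u p) = totalMass p := by
  simp only [totalMass, rowMass]
  rw [Finset.sum_comm, Finset.sum_comm (f := p)]
  exact Finset.sum_congr rfl fun y _ => sum_redistribute hp hu ht0 hmass y

lemma rowMass_redistribute (hu : ∀ k, 0 ≤ u k) (ht0 : 0 ≤ t) (hmass : ∑ k, u k = totalMass p)
    (k : K) : rowMass (redistribute t u p) k = (1 - t) * rowMass p k + t * u k := by
  have hgain : deficit t u p k * (∑ y, ∑ k', removed t u p k' y) / ∑ k', deficit t u p k' =
      deficit t u p k := by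
    rw [sum_sum_removed hu hmass]
    exact mul_div_self_of_le (deficit_nonneg ht0 k)
      (Finset.single_le_sum (fun k' _ => deficit_nonneg ht0 k') (Finset.mem_univ k))
  have hmove := deficit_sub_surplus (t := t) (u := u) (p := p) k
  simp only [rowMass, redistribute, Finset.sum_add_distrib, Finset.sum_sub_distrib,
    ← Finset.sum_div, ← Finset.mul_sum] at hgain hmove ⊢
  rw [hgain, sum_removed hu k]
  linear_combination hmove

lemma sum_posPart_sub_redistribute_le (hp : ∀ k y, 0 ≤ p k y) (hu : ∀ k, 0 ≤ u k)
    (ht0 : 0 ≤ t) (k : K) :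
    ∑ y, (p k y - redistribute t u p k y)⁺ ≤ surplus t u p k := by
  rw [← sum_removed hu k]
  exact Finset.sum_le_sum fun y _ => max_le
    (by linarith [sub_removed_le_redistribute hp ht0 (u := u) k y]) (removed_nonneg hp ht0 k y)

end Redistribution

open Redistribution

section HybridProtocol

variable {K W : Type*} [Fintype K]

def fiber (P : K × K × K × W → ℝ) (w : W) (k : K) (y : K × K) : ℝ := P (k, y.1, y.2, w)

/-- `keyMarginal P` is `P_{KFZ}`, and `uniformMarginal P` is `P_unif × P_{FZ}`. -/
def keyMarginal (P : K × K × K × W → ℝ) (q : K × W) : ℝ := rowMass (fiber P q.2) q.1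

def uniformMarginal (P : K × K × K × W → ℝ) (q : K × W) : ℝ :=
  (Fintype.card K : ℝ)⁻¹ * totalMass (fiber P q.2)

def hybridPMF (t : ℝ) (P : K × K × K × W → ℝ) (x : K × K × K × W) : ℝ :=
  redistribute t (fun k => uniformMarginal P (k, x.2.2.2)) (fiber P x.2.2.2) x.1 (x.2.1, x.2.2.1)

def fiberEquiv : (K × (K × K)) × W ≃ K × K × K × W where
  toFun v := (v.1.1, v.1.2.1, v.1.2.2, v.2)
  invFun x := ((x.1, x.2.1, x.2.2.1), x.2.2.2)
  left_inv _ := rfl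
  right_inv _ := rfl

lemma fiber_hybridPMF (t : ℝ) (P : K × K × K × W → ℝ) (w : W) :
    fiber (hybridPMF t P) w = redistribute t (fun k => uniformMarginal P (k, w)) (fiber P w) :=
  rfl

variable {P : K × K × K × W → ℝ}

lemma summable_iff_summable_totalMass_fiber (hP : ∀ x, 0 ≤ P x) :
    Summable P ↔ Summable fun w => totalMass (fiber P w) := by
  rw [← fiberEquiv.summable_iff,
    summable_prod_iff_summable_sum_fst (f := P ∘ fiberEquiv) fun _ => hP _]
  simp only [totalMass, rowMass, fiber, Fintype.sum_prod_type]
  rfl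

lemma tsum_eq_tsum_totalMass_fiber (hP : Summable P) :
    ∑' x, P x = ∑' w, totalMass (fiber P w) := by
  calc ∑' x, P x = ∑' v, (P ∘ fiberEquiv) v := (fiberEquiv.tsum_eq P).symm
    _ = ∑' w, ∑ a, (P ∘ fiberEquiv) (a, w) :=
        tsum_prod_eq_tsum_sum_fst (fiberEquiv.summable_iff.mpr hP)
    _ = ∑' w, totalMass (fiber P w) := by
        simp only [totalMass, rowMass, fiber, Fintype.sum_prod_type]
        rfl

lemma sum_uniformMarginal (w : W) :
    ∑ k, uniformMarginal P (k, w) = totalMass (fiber P w) := by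
  simp only [uniformMarginal, totalMass]
  exact sum_inv_card_mul_sum _

lemma keyMarginal_eq_tsum (P : K × K × K × W → ℝ) :
    (fun q : K × W => ∑' (kx : K) (ky : K), P (q.1, kx, ky, q.2)) = keyMarginal P := by
  ext q
  simp only [tsum_fintype, keyMarginal, rowMass, fiber, Fintype.sum_prod_type]

lemma uniformMarginal_eq_tsum (P : K × K × K × W → ℝ) :
    (fun q : K × W => (Fintype.card K : ℝ)⁻¹ * ∑' (k : K) (kx : K) (ky : K), P (k, kx, ky, q.2)) =
      uniformMarginal P := by
  ext q
  simp only [tsum_fintype, uniformMarginal, totalMass, rowMass, fiber, Fintype.sum_prod_type]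

variable (hP0 : ∀ x, 0 ≤ P x)
include hP0

lemma keyMarginal_nonneg (q : K × W) : 0 ≤ keyMarginal P q :=
  rowMass_nonneg (fun _ _ => hP0 _) q.1

lemma uniformMarginal_nonneg (q : K × W) : 0 ≤ uniformMarginal P q :=
  mul_nonneg (by positivity) (totalMass_nonneg fun _ _ => hP0 _)

lemma summable_keyMarginal (hPs : Summable P) : Summable (keyMarginal P) :=
  (summable_prod_iff_summable_sum_fst (keyMarginal_nonneg hP0)).mpr
    ((summable_iff_summable_totalMass_fiber hP0).mp hPs)

lemma summable_uniformMarginal (hPs : Summable P) : Summable (uniformMarginal P) := by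
  refine (summable_prod_iff_summable_sum_fst (uniformMarginal_nonneg hP0)).mpr ?_
  simpa only [sum_uniformMarginal] using (summable_iff_summable_totalMass_fiber hP0).mp hPs

lemma tsum_keyMarginal_eq_tsum_uniformMarginal (hPs : Summable P) :
    ∑' q, keyMarginal P q = ∑' q, uniformMarginal P q := by
  rw [tsum_prod_eq_tsum_sum_fst (summable_keyMarginal hP0 hPs),
    tsum_prod_eq_tsum_sum_fst (summable_uniformMarginal hP0 hPs)]
  simp only [sum_uniformMarginal]
  rfl

variable {t : ℝ} (ht0 : 0 ≤ t)
include ht0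

lemma hybridPMF_nonneg (ht1 : t ≤ 1) (x : K × K × K × W) : 0 ≤ hybridPMF t P x :=
  redistribute_nonneg (fun _ _ => hP0 _) (fun _ => uniformMarginal_nonneg hP0 _) ht0 ht1 _ _

lemma sum_hybridPMF (kx ky : K) (w : W) :
    ∑ k, hybridPMF t P (k, kx, ky, w) = ∑ k, P (k, kx, ky, w) :=
  sum_redistribute (fun _ _ => hP0 _) (fun _ => uniformMarginal_nonneg hP0 _) ht0
    (sum_uniformMarginal w) (kx, ky)

lemma totalMass_fiber_hybridPMF (w : W) :
    totalMass (fiber (hybridPMF t P) w) = totalMass (fiber P w) := by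
  rw [fiber_hybridPMF]
  exact totalMass_redistribute (fun _ _ => hP0 _) (fun _ => uniformMarginal_nonneg hP0 _) ht0
    (sum_uniformMarginal w)

lemma keyMarginal_hybridPMF :
    keyMarginal (hybridPMF t P) = fun q => (1 - t) * keyMarginal P q + t * uniformMarginal P q :=
  funext fun q => rowMass_redistribute (fun _ => uniformMarginal_nonneg hP0 _) ht0
    (sum_uniformMarginal q.2) q.1

lemma tvDist_keyMarginal_hybridPMF (ht1 : t ≤ 1) :
    tvDist (keyMarginal (hybridPMF t P)) (uniformMarginal P) =
      (1 - t) * tvDist (keyMarginal P) (uniformMarginal P) := by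
  rw [keyMarginal_hybridPMF hP0 ht0, tvDist_lineMap_left _ _ ht1]

variable (ht1 : t ≤ 1)
include ht1

lemma summable_hybridPMF (hPs : Summable P) : Summable (hybridPMF t P) := by
  rw [summable_iff_summable_totalMass_fiber (hybridPMF_nonneg hP0 ht0 ht1)]
  simpa only [totalMass_fiber_hybridPMF hP0 ht0] using
    (summable_iff_summable_totalMass_fiber hP0).mp hPs

lemma tsum_hybridPMF (hPs : Summable P) : ∑' x, hybridPMF t P x = ∑' x, P x := by
  rw [tsum_eq_tsum_totalMass_fiber (summable_hybridPMF hP0 ht0 ht1 hPs),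
    tsum_eq_tsum_totalMass_fiber hPs]
  simp only [totalMass_fiber_hybridPMF hP0 ht0]

lemma probOf_sub_probOf_hybridPMF_le (hPs : Summable P) (S : Set (K × K × K × W)) :
    probOf P S - probOf (hybridPMF t P) S ≤ t * tvDist (keyMarginal P) (uniformMarginal P) := by
  have hk := summable_keyMarginal hP0 hPs
  have hu := summable_uniformMarginal hP0 hPs
  have hQs := summable_hybridPMF hP0 ht0 ht1 hPs
  have hgap : Summable fun q => (keyMarginal P q - uniformMarginal P q)⁺ :=
    .of_nonneg_of_le (fun _ => posPart_nonneg _)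
      (fun _ => max_le (le_abs_self _) (abs_nonneg _)) (hk.sub hu).abs
  have hloss : Summable fun x => (P x - hybridPMF t P x)⁺ :=
    .of_nonneg_of_le (fun _ => posPart_nonneg _)
      (fun _ => max_le (le_abs_self _) (abs_nonneg _)) (hPs.sub hQs).abs
  have hfiber (w : W) : totalMass (fiber (fun x => (P x - hybridPMF t P x)⁺) w) ≤
      t * ∑ k, (keyMarginal P (k, w) - uniformMarginal P (k, w))⁺ := by
    rw [Finset.mul_sum]
    exact Finset.sum_le_sum fun k _ =>
      sum_posPart_sub_redistribute_le (p := fiber P w) (u := fun k => uniformMarginal P (k, w))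
        (fun _ _ => hP0 _) (fun _ => uniformMarginal_nonneg hP0 _) ht0 k
  calc probOf P S - probOf (hybridPMF t P) S ≤ ∑' x, (P x - hybridPMF t P x)⁺ :=
        probOf_sub_probOf_le_tsum_posPart hPs hQs S
    _ = ∑' w, totalMass (fiber (fun x => (P x - hybridPMF t P x)⁺) w) :=
        tsum_eq_tsum_totalMass_fiber hloss
    _ ≤ ∑' w, t * ∑ k, (keyMarginal P (k, w) - uniformMarginal P (k, w))⁺ :=
        Summable.tsum_le_tsum hfiber
          ((summable_iff_summable_totalMass_fiber fun _ => posPart_nonneg _).mp hloss)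
          (((summable_prod_iff_summable_sum_fst fun _ => posPart_nonneg _).mp hgap).mul_left t)
    _ = t * tvDist (keyMarginal P) (uniformMarginal P) := by
        rw [tsum_mul_left, ← tsum_prod_eq_tsum_sum_fst hgap,
          tsum_posPart_sub_eq_tvDist hk hu (tsum_keyMarginal_eq_tsum_uniformMarginal hP0 hPs)]

omit hP0 in
lemma IsPMF.hybridPMF (hP : IsPMF P) : IsPMF (hybridPMF t P) :=
  ⟨hybridPMF_nonneg hP.1 ht0 ht1, by rw [tsum_hybridPMF hP.1 ht0 ht1 hP.summable, hP.2]⟩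

end HybridProtocol

theorem hybrid_protocol_general
    {K T Z : Type*} [Fintype K]
    (η α : ℝ)
    (P : K × K × K × T × Z → ℝ) (hP : IsPMF P)
    (hrel : 1 - η ≤ probOf P {w | w.1 = w.2.1 ∧ w.2.1 = w.2.2.1})
    (hsec : tvDist
        (fun q : K × T × Z => ∑' (kx : K) (ky : K), P (q.1, kx, ky, q.2.1, q.2.2))
        (fun q : K × T × Z => (Fintype.card K : ℝ)⁻¹ *
          ∑' (k : K) (kx : K) (ky : K), P (k, kx, ky, q.2.1, q.2.2)) ≤ α)
    (ε δ : ℝ) (hδ0 : 0 < δ)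
    (hεη : η ≤ ε) (hsum : α + η ≤ ε + δ) :
    ∃ Q : K × K × K × T × Z → ℝ, IsPMF Q ∧
      -- the marginal of Q on (Kx, Ky, F, Z) equals that of P
      (∀ v : K × K × T × Z,
        (∑' k : K, Q (k, v.1, v.2.1, v.2.2.1, v.2.2.2))
          = ∑' k : K, P (k, v.1, v.2.1, v.2.2.1, v.2.2.2)) ∧
      -- Pr_Q[K'' = Kx = Ky] ≥ 1 - ε
      1 - ε ≤ probOf Q {w | w.1 = w.2.1 ∧ w.2.1 = w.2.2.1} ∧
      -- d(Q_{K''FZ}, P_unif × P_{FZ}) ≤ δ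
      tvDist
        (fun q : K × T × Z => ∑' (kx : K) (ky : K), Q (q.1, kx, ky, q.2.1, q.2.2))
        (fun q : K × T × Z => (Fintype.card K : ℝ)⁻¹ *
          ∑' (k : K) (kx : K) (ky : K), P (k, kx, ky, q.2.1, q.2.2)) ≤ δ := by
  rw [keyMarginal_eq_tsum, uniformMarginal_eq_tsum] at hsec
  obtain ⟨t, ht0, ht1, hloss, hgap⟩ := exists_mul_le_and_one_sub_mul_le
    (tvDist_nonneg _ _) (sub_nonneg.mpr hεη) hδ0.le
    (show tvDist (keyMarginal P) (uniformMarginal P) ≤ ε - η + δ by linarith)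
  refine ⟨hybridPMF t P, hP.hybridPMF ht0 ht1, fun v => ?_, ?_, ?_⟩
  · simp only [tsum_fintype]
    exact sum_hybridPMF hP.1 ht0 _ _ _
  · linarith [probOf_sub_probOf_hybridPMF_le hP.1 ht0 ht1 hP.summable
      {w | w.1 = w.2.1 ∧ w.2.1 = w.2.2.1}]
  · rw [keyMarginal_eq_tsum, uniformMarginal_eq_tsum, tvDist_keyMarginal_hybridPMF hP.1 ht0 ht1]
    exact hgap

/-- hybrid protocol. Coordinates of `P` are `(K, Kx, Ky, F, Z)`;
coordinates of `Q` are `(K'', Kx, Ky, F, Z)`. -/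
theorem hybrid_protocol
    {K T Z : Type*} [Fintype K] [Countable T] [Countable Z]
    (η α : ℝ) (hη0 : 0 ≤ η) (hη1 : η < 1) (hα0 : 0 ≤ α) (hα1 : α < 1)
    (P : K × K × K × T × Z → ℝ) (hP : IsPMF P)
    (hrel : 1 - η ≤ probOf P {w | w.1 = w.2.1 ∧ w.2.1 = w.2.2.1})
    (hsec : tvDist
        (fun q : K × T × Z => ∑' (kx : K) (ky : K), P (q.1, kx, ky, q.2.1, q.2.2))
        (fun q : K × T × Z => (Fintype.card K : ℝ)⁻¹ *
          ∑' (k : K) (kx : K) (ky : K), P (k, kx, ky, q.2.1, q.2.2)) ≤ α)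
    (ε δ : ℝ) (hε0 : 0 < ε) (hε1 : ε < 1) (hδ0 : 0 < δ) (hδ1 : δ < 1)
    (hεη : η ≤ ε) (hsum : α + η ≤ ε + δ) :
    ∃ Q : K × K × K × T × Z → ℝ, IsPMF Q ∧
      -- the marginal of Q on (Kx, Ky, F, Z) equals that of P
      (∀ v : K × K × T × Z,
        (∑' k : K, Q (k, v.1, v.2.1, v.2.2.1, v.2.2.2))
          = ∑' k : K, P (k, v.1, v.2.1, v.2.2.1, v.2.2.2)) ∧
      -- Pr_Q[K'' = Kx = Ky] ≥ 1 - ε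
      1 - ε ≤ probOf Q {w | w.1 = w.2.1 ∧ w.2.1 = w.2.2.1} ∧
      -- d(Q_{K''FZ}, P_unif × P_{FZ}) ≤ δ
      tvDist
        (fun q : K × T × Z => ∑' (kx : K) (ky : K), Q (q.1, kx, ky, q.2.1, q.2.2))
        (fun q : K × T × Z => (Fintype.card K : ℝ)⁻¹ *
          ∑' (k : K) (kx : K) (ky : K), P (k, kx, ky, q.2.1, q.2.2)) ≤ δ :=
  hybrid_protocol_general η α P hP hrel hsec ε δ hδ0 hεη hsum
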